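/- arXiv:1708.02665 — 3 statements merged into one kernel-verified Lean document; each statement's English description precedes it below -/
import Mathlib

section
/- Let A be a simple unital C*-algebra. If the topological stable rank of A is finite, then A is finite (i.e., A contains no isometry that is not a unitary; equivalently, the unit 1 is not Murray–von Neumann equivalent to a proper subprojection). -/
/-- The set `Lg_n(A)` of left-generating `n`-tuples: tuples `(b 0, …, b (n-1))` such that
`∑ᵢ bᵢ* bᵢ` is invertible. -/
def Lg (A : Type*) [NormedRing A] [StarRing A] (n : ℕ) : Set (Fin n → A) :=
  {b | IsUnit (∑ i, star (b i) * b i)}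

/-- The topological stable rank of a unital (C*-)algebra: the least `n ≥ 1` such that
`Lg_n(A)` is dense in `Aⁿ`, or `∞` if there is no such `n`. -/
noncomputable def tsr (A : Type*) [NormedRing A] [StarRing A] : ℕ∞ :=
  sInf {N : ℕ∞ | ∃ n : ℕ, 1 ≤ n ∧ N = n ∧ Dense (Lg A n)}

/-- A C*-algebra is simple if it is nonzero and has no nontrivial closed two-sided ideals. -/
def CStarSimple (A : Type*) [CStarAlgebra A] : Prop :=
  (0 : A) ≠ 1 ∧ ∀ I : TwoSidedIdeal A, IsClosed (I : Set A) → I = ⊥ ∨ I = ⊤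

/-- A unital C*-algebra is finite if every isometry is a unitary (equivalently, `1` is not
Murray–von Neumann equivalent to a proper subprojection). -/
def CStarFinite (A : Type*) [CStarAlgebra A] : Prop :=
  ∀ v : A, star v * v = 1 → v * star v = 1

/-- A tracial state on a unital C*-algebra: a unital positive linear functional `τ`
with `τ(ab) = τ(ba)`. -/
def IsTracialState (A : Type*) [CStarAlgebra A] (τ : WeakDual ℂ A) : Prop :=
  τ 1 = 1 ∧ (∀ a : A, ∃ r : ℝ, 0 ≤ r ∧ τ (star a * a) = (r : ℂ)) ∧
    ∀ a b : A, τ (a * b) = τ (b * a)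

/-- The trace space `T(A)`, as a subset of the weak-* dual. -/
def TraceSpace (A : Type*) [CStarAlgebra A] : Set (WeakDual ℂ A) :=
  {τ | IsTracialState A τ}

/-- A conditional expectation from `B` onto `A`, relative to a unital embedding
`ι : A → B`: a unital positive `A`-bimodule projection of `B` onto `A`. -/
structure CondExpectation {A B : Type*} [CStarAlgebra A] [CStarAlgebra B]
    (ι : A →⋆ₐ[ℂ] B) where
  toFun : B →L[ℂ] A
  fix : ∀ a : A, toFun (ι a) = a
  left_mod : ∀ (a : A) (b : B), toFun (ι a * b) = a * toFun b
  right_mod : ∀ (a : A) (b : B), toFun (b * ι a) = toFun b * a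
  star_map : ∀ b : B, toFun (star b) = star (toFun b)
  pos : ∀ b : B, ∃ c : A, toFun (star b * b) = star c * c

/-- A quasi-basis for a conditional expectation `E`: a finite family `(v k)` in `B` with
`b = ∑ₖ vₖ E(vₖ* b) = ∑ₖ E(b vₖ) vₖ*` for all `b`. -/
def IsQuasiBasis {A B : Type*} [CStarAlgebra A] [CStarAlgebra B] {ι : A →⋆ₐ[ℂ] B}
    (E : CondExpectation ι) {n : ℕ} (v : Fin n → B) : Prop :=
  ∀ b : B, (b = ∑ k, v k * ι (E.toFun (star (v k) * b))) ∧
    (b = ∑ k, ι (E.toFun (b * v k)) * star (v k))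

/-- An inclusion `A ⊆ B` (given by the unital embedding `ι`) is of index-finite type if
there is a conditional expectation `E : B → A` admitting a finite quasi-basis. -/
def IndexFiniteType {A B : Type*} [CStarAlgebra A] [CStarAlgebra B]
    (ι : A →⋆ₐ[ℂ] B) : Prop :=
  ∃ (E : CondExpectation ι) (n : ℕ) (v : Fin n → B), IsQuasiBasis E v

/-- A realization of the (spatial/maximal, these agree in the nuclear case) C*-tensor
product of `B` and `Z`: a C*-algebra `T` together with commuting unital embeddings of `B`
and `Z` whose images generate `T` as a C*-algebra. -/
structure CStarTensor (B Z T : Type*) [CStarAlgebra B] [CStarAlgebra Z]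
    [CStarAlgebra T] where
  ι₁ : B →⋆ₐ[ℂ] T
  ι₂ : Z →⋆ₐ[ℂ] T
  inj₁ : Function.Injective ι₁
  inj₂ : Function.Injective ι₂
  comm : ∀ (b : B) (z : Z), ι₁ b * ι₂ z = ι₂ z * ι₁ b
  generates :
    (StarAlgebra.adjoin ℂ (Set.range (⇑ι₁) ∪ Set.range (⇑ι₂))).topologicalClosure = ⊤

/-- `B` absorbs `Z` tensorially: `B ⊗ Z ≅ B`. -/
def AbsorbsTensor (B Z : Type*) [CStarAlgebra B] [CStarAlgebra Z] : Prop :=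
  ∃ (T : Type) (_ : CStarAlgebra T) (_ : CStarTensor B Z T), Nonempty (T ≃⋆ₐ[ℂ] B)

/-- The n×n matrix algebra `Mₙ(ℂ)`, realized as operators on `ℂⁿ`. -/
abbrev MatrixAlg (n : ℕ) : Type :=
  EuclideanSpace ℂ (Fin n) →L[ℂ] EuclideanSpace ℂ (Fin n)

/-- A linear map between C*-algebras is completely positive if all of its matrix
amplifications preserve positivity. -/
def IsCompletelyPositive {A B : Type*} [CStarAlgebra A] [CStarAlgebra B]
    (φ : A →L[ℂ] B) : Prop :=
  ∀ (n : ℕ) (x : Matrix (Fin n) (Fin n) A), (∃ y : Matrix (Fin n) (Fin n) A, x = star y * y) →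
    ∃ z : Matrix (Fin n) (Fin n) B, x.map (⇑φ) = star z * z

/-- A C*-algebra is nuclear if the identity map can be approximated pointwise in norm by
unital completely positive maps factoring through matrix algebras. -/
def IsNuclear (A : Type*) [CStarAlgebra A] : Prop :=
  ∀ (s : Finset A) (ε : ℝ), 0 < ε →
    ∃ (n : ℕ) (φ : A →L[ℂ] MatrixAlg n) (ψ : MatrixAlg n →L[ℂ] A),
      IsCompletelyPositive φ ∧ IsCompletelyPositive ψ ∧ φ 1 = 1 ∧ ‖ψ‖ ≤ 1 ∧
      ∀ a ∈ s, ‖ψ (φ a) - a‖ < ε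

/-- The Jiang–Su algebra: the (unique) unital separable simple infinite-dimensional
nuclear C*-algebra with a unique tracial state whose K-theory agrees with that of `ℂ`;
here characterized by the listed properties together with being strongly self-absorbing. -/
structure IsJiangSuAlgebra (Z : Type*) [CStarAlgebra Z] : Prop where
  separable : TopologicalSpace.SeparableSpace Z
  simple : CStarSimple Z
  nuclear : IsNuclear Z
  infiniteDimensional : ¬ FiniteDimensional ℂ Z
  uniqueTracialState : ∃! τ : WeakDual ℂ Z, IsTracialState Z τ
  selfAbsorbing : AbsorbsTensor Z Z

/-- An action of a group `G` on a C*-algebra `A` by *-automorphisms. -/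
structure CStarAction (G : Type*) [Group G] (A : Type*) [CStarAlgebra A] where
  hom : G → (A ≃⋆ₐ[ℂ] A)
  hom_one : ∀ a : A, hom 1 a = a
  hom_mul : ∀ (g h : G) (a : A), hom (g * h) a = hom g (hom h a)

/-- A realization of the C*-crossed product `A ⋊_α G` (for `G` finite, the universal and
reduced crossed products agree): a C*-algebra `B` generated by a copy of `A` and unitaries
`u g` implementing `α`, together with the canonical faithful conditional expectation onto
`A` determined by `E(a u_g) = δ_{g,e} a`. -/
structure CrossedProduct (G : Type*) [Group G] (A : Type*) [CStarAlgebra A]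
    (α : CStarAction G A) (B : Type*) [CStarAlgebra B] where
  ι : A →⋆ₐ[ℂ] B
  inj : Function.Injective ι
  u : G → B
  u_unitary : ∀ g, star (u g) * u g = 1 ∧ u g * star (u g) = 1
  u_mul : ∀ g h, u g * u h = u (g * h)
  u_one : u 1 = 1
  covariant : ∀ (g : G) (a : A), u g * ι a * star (u g) = ι (α.hom g a)
  generates :
    (StarAlgebra.adjoin ℂ (Set.range (⇑ι) ∪ Set.range u)).topologicalClosure = ⊤
  E : B →L[ℂ] B
  E_apply_one : ∀ a : A, E (ι a * u 1) = ι a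
  E_apply_ne : ∀ (a : A) (g : G), g ≠ 1 → E (ι a * u g) = 0
  E_mem : ∀ b, E b ∈ Set.range (⇑ι)
  E_pos : ∀ b : B, ∃ a : A, E (star b * b) = ι (star a * a)
  E_faithful : ∀ b : B, E (star b * b) = 0 → b = 0

/-- Covering dimension at most `n`: every open cover has an open refinement in which each
point lies in at most `n + 1` sets. -/
def CoveringDimLe (X : Type*) [TopologicalSpace X] (n : ℕ) : Prop :=
  ∀ (I : Type) (U : I → Set X), (∀ i, IsOpen (U i)) → (⋃ i, U i) = Set.univ →
    ∃ (J : Type) (V : J → Set X), (∀ j, IsOpen (V j)) ∧ (⋃ j, V j) = Set.univ ∧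
      (∀ j, ∃ i, V j ⊆ U i) ∧
      ∀ x : X, {j | x ∈ V j}.Finite ∧ {j | x ∈ V j}.ncard ≤ n + 1

/-!
If `v` is an isometry that is not unitary, `p = 1 - v v*` is a nonzero projection and the
partial isometries `vᵏ p` have pairwise orthogonal ranges. Simplicity makes `p` full,
`∑ₖ xₖ p yₖ = 1`, so `z = ∑_{k<m} vᵏ p yₖ` has invertible `z* z` and its polar part `w` is an
isometry with `w* vᵐ = 0`; the isometries `(vᵐ)ⁱ w` then have pairwise orthogonal ranges.
Given such isometries `S₀, …, Sₙ`, every tuple `b` close to `(S₀*, …, Sₙ₋₁*)` is of the form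
`bᵢ = Sᵢ* u` with `u = 1 - ∑ₖ Sₖ (Sₖ* - bₖ)` invertible, so `∑ᵢ bᵢ* bᵢ = (∑ᵢ bᵢ* Sᵢ*) u` is not
invertible because `∑ᵢ bᵢ* Sᵢ*` kills `Sₙ`. Hence no `Lg_n(A)` is dense.
-/

open Finset

section IsometryPowers

variable {R : Type*} [Semiring R] [StarRing R] {s t : R}

theorem star_pow_mul_pow_add (hs : star s * s = 1) (i k : ℕ) :
    star (s ^ i) * s ^ (i + k) = s ^ k := by
  induction i with
  | zero => simp
  | succ i ih =>
    rw [pow_succ', star_mul, show i + 1 + k = i + k + 1 by omega, pow_succ', mul_assoc,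
      ← mul_assoc (star s), hs, one_mul, ih]

theorem star_pow_mul_pow_self (hs : star s * s = 1) (i : ℕ) : star (s ^ i) * s ^ i = 1 := by
  simpa using star_pow_mul_pow_add hs i 0

theorem star_pow_mul_mul_pow_eq_zero (hs : star s * s = 1) (hts : star t * s = 0) {i j : ℕ}
    (hij : i < j) : star (s ^ i * t) * s ^ j = 0 := by
  obtain ⟨k, rfl⟩ := Nat.exists_eq_add_of_lt hij
  rw [star_mul, mul_assoc, add_assoc, star_pow_mul_pow_add hs, pow_succ', ← mul_assoc, hts,
    zero_mul]

theorem star_pow_mul_mul_pow_mul (hs : star s * s = 1) (hts : star t * s = 0) (i j : ℕ) :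
    star (s ^ i * t) * (s ^ j * t) = if i = j then star t * t else 0 := by
  rcases lt_trichotomy i j with hij | rfl | hji
  · rw [if_neg hij.ne, ← mul_assoc, star_pow_mul_mul_pow_eq_zero hs hts hij, zero_mul]
  · rw [if_pos rfl, star_mul, mul_assoc, ← mul_assoc (star (s ^ i)), star_pow_mul_pow_self hs,
      one_mul]
  · rw [if_neg hji.ne', ← star_star (star (s ^ i * t) * (s ^ j * t)), star_mul, star_star,
      ← mul_assoc, star_pow_mul_mul_pow_eq_zero hs hts hji, zero_mul, star_zero]

theorem star_sum_pow_mul_mul_sum (hs : star s * s = 1) (hts : star t * s = 0) {m : ℕ}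
    (x : Fin m → R) :
    star (∑ k : Fin m, s ^ (k : ℕ) * (t * x k)) * ∑ k : Fin m, s ^ (k : ℕ) * (t * x k) =
      ∑ k, star (t * x k) * (t * x k) := by
  have hterm (i j : Fin m) : star (s ^ (i : ℕ) * (t * x i)) * (s ^ (j : ℕ) * (t * x j)) =
      if i = j then star (t * x i) * (t * x i) else 0 := by
    calc _ = star (x i) * (star (s ^ (i : ℕ) * t) * (s ^ (j : ℕ) * t)) * x j := by
          simp only [star_mul, mul_assoc]
      _ = _ := by
          rw [star_pow_mul_mul_pow_mul hs hts]
          simp only [Fin.val_inj]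
          split_ifs with hij
          · simp only [hij, star_mul, mul_assoc]
          · simp
  simp only [star_sum, sum_mul_sum, hterm, sum_ite_eq, mem_univ, if_true]

theorem star_sum_pow_mul_mul_pow_eq_zero (hs : star s * s = 1) (hts : star t * s = 0) {m : ℕ}
    (x : Fin m → R) : star (∑ k : Fin m, s ^ (k : ℕ) * (t * x k)) * s ^ m = 0 := by
  rw [star_sum, sum_mul]
  refine sum_eq_zero fun k _ => ?_
  rw [← mul_assoc, star_mul, mul_assoc, star_pow_mul_mul_pow_eq_zero hs hts k.is_lt, mul_zero]

end IsometryPowers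

def TwoSidedIdeal.topologicalClosure {R : Type*} [Ring R] [TopologicalSpace R]
    [IsTopologicalRing R] (I : TwoSidedIdeal R) : TwoSidedIdeal R :=
  .mk' (closure I) (subset_closure I.zero_mem)
    (fun hx hy => map_mem_closure₂ continuous_add hx hy fun _ ha _ hb => I.add_mem ha hb)
    (fun hx => map_mem_closure continuous_neg hx fun _ ha => I.neg_mem ha)
    (fun hy => map_mem_closure (continuous_const_mul _) hy fun _ hb => I.mul_mem_left _ _ hb)
    (fun {_ y} hx => map_mem_closure (f := (· * y)) (continuous_mul_const _) hx
      fun _ ha => I.mul_mem_right _ _ ha)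

@[simp]
theorem TwoSidedIdeal.coe_topologicalClosure {R : Type*} [Ring R] [TopologicalSpace R]
    [IsTopologicalRing R] (I : TwoSidedIdeal R) :
    (I.topologicalClosure : Set R) = closure I :=
  TwoSidedIdeal.coe_mk' _ _ _ _ _ _

theorem TwoSidedIdeal.exists_sum_mul_mul_eq_of_mem_span_singleton {R : Type*} [Ring R] {a z : R}
    (hz : z ∈ span {a}) : ∃ (m : ℕ) (x y : Fin m → R), ∑ k, x k * a * y k = z := by
  rw [mem_span_iff_mem_addSubgroup_closure] at hz
  induction hz using AddSubgroup.closure_induction with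
  | mem z hz =>
    obtain ⟨_, ⟨x, -, _, rfl, rfl⟩, y, -, rfl⟩ := hz
    exact ⟨1, fun _ => x, fun _ => y, by simp⟩
  | zero => exact ⟨0, Fin.elim0, Fin.elim0, by simp⟩
  | add _ _ _ _ h₁ h₂ =>
    obtain ⟨m₁, x₁, y₁, rfl⟩ := h₁
    obtain ⟨m₂, x₂, y₂, rfl⟩ := h₂
    exact ⟨m₁ + m₂, Fin.append x₁ x₂, Fin.append y₁ y₂, by simp [Fin.sum_univ_add]⟩
  | neg _ _ h =>
    obtain ⟨m, x, y, rfl⟩ := h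
    exact ⟨m, -x, y, by simp⟩

theorem TwoSidedIdeal.eq_top_of_one_mem_closure {R : Type*} [NormedRing R] [CompleteSpace R]
    {I : TwoSidedIdeal R} (h : (1 : R) ∈ closure (I : Set R)) : I = ⊤ := by
  obtain ⟨x, hxI, hx⟩ := Metric.mem_closure_iff.1 h 1 one_pos
  have hxu : IsUnit x := by
    simpa using isUnit_one_sub_of_norm_lt_one (x := 1 - x) (by rwa [← dist_eq_norm])
  rw [← I.one_mem_iff, ← hxu.val_inv_mul]
  exact I.mul_mem_left _ _ hxI

section CStarAlgebra

variable {A : Type*} [CStarAlgebra A]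

theorem CStarSimple.exists_sum_mul_mul_eq_one (hA : CStarSimple A) {a : A} (ha : a ≠ 0) :
    ∃ (m : ℕ) (x y : Fin m → A), ∑ k, x k * a * y k = 1 := by
  set I := TwoSidedIdeal.span {a}
  have hclosure : I.topologicalClosure = ⊤ := by
    refine (hA.2 _ (by simp [isClosed_closure])).resolve_left fun hbot => ha ?_
    have : a ∈ I.topologicalClosure := by
      rw [← SetLike.mem_coe, TwoSidedIdeal.coe_topologicalClosure]
      exact subset_closure (TwoSidedIdeal.subset_span rfl)
    rwa [hbot, TwoSidedIdeal.mem_bot] at this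
  have hI : I = ⊤ := TwoSidedIdeal.eq_top_of_one_mem_closure <| by
    rw [← TwoSidedIdeal.coe_topologicalClosure, hclosure]
    trivial
  exact TwoSidedIdeal.exists_sum_mul_mul_eq_of_mem_span_singleton (I.one_mem_iff.2 hI)

open scoped WithCStarModule in
theorem isUnit_sum_star_mul_self_of_sum_star_mul_eq_one [PartialOrder A] [StarOrderedRing A]
    {ι : Type*} [Fintype ι] {f g : ι → A}
    (hfg : ∑ k, star (f k) * g k = 1) : IsUnit (∑ k, star (g k) * g k) := by
  nontriviality A
  let x : C⋆ᵐᵒᵈ(A, ι → A) := (WithCStarModule.equiv A _).symm (star f)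
  let y : C⋆ᵐᵒᵈ(A, ι → A) := (WithCStarModule.equiv A _).symm (star g)
  have hxy : inner A x y = 1 := by
    simpa [WithCStarModule.pi_inner, WithCStarModule.inner_def, x, y] using congrArg star hfg
  have hyx : inner A y x = 1 := by
    simpa [WithCStarModule.pi_inner, WithCStarModule.inner_def, x, y] using hfg
  have hyy : inner A y y = ∑ k, star (g k) * g k := by
    simp [WithCStarModule.pi_inner, WithCStarModule.inner_def, y]
  -- Cauchy–Schwarz in the Hilbert module `ι → A`: `1 = ⟪x, y⟫ ⟪y, x⟫ ≤ ‖x‖² ⟪y, y⟫`.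
  have hle : (1 : A) ≤ ‖x‖ ^ 2 • ∑ k, star (g k) * g k := by
    simpa [hxy, hyx, hyy] using CStarModule.inner_mul_inner_swap_le (A := A) (x := x) (y := y)
  have hunit := CStarAlgebra.isUnit_of_le 1 hle
  have hx : ‖x‖ ^ 2 ≠ 0 := by
    rintro hx
    rw [hx, zero_smul] at hunit
    exact not_isUnit_zero hunit
  exact (isUnit_smul_iff (Units.mk0 _ hx) _).1 hunit

theorem exists_isometry_mul_of_isUnit_star_mul_self [PartialOrder A] [StarOrderedRing A] {z : A}
    (hz : IsUnit (star z * z)) : ∃ c : A, star (z * c) * (z * c) = 1 := by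
  set r := CFC.sqrt (star z * z)
  have hr : IsUnit r := (CFC.isUnit_sqrt_iff _).2 hz
  have hrr : r * r = star z * z := CFC.sqrt_mul_sqrt_self _
  have hr_sa : star r = r := (CFC.sqrt_nonneg _).isSelfAdjoint
  refine ⟨Ring.inverse r, ?_⟩
  calc star (z * Ring.inverse r) * (z * Ring.inverse r)
      = star (Ring.inverse r) * (r * r) * Ring.inverse r := by
        rw [hrr]; simp only [star_mul, mul_assoc]
    _ = (Ring.inverse r * r) * (r * Ring.inverse r) := by
        rw [← Ring.inverse_star, hr_sa]; simp only [mul_assoc]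
    _ = 1 := by rw [Ring.inverse_mul_cancel r hr, Ring.mul_inverse_cancel r hr, one_mul]

theorem CStarSimple.exists_isometry_star_mul_pow_eq_zero (hA : CStarSimple A) {v : A}
    (hv : star v * v = 1) (hv' : v * star v ≠ 1) :
    ∃ (m : ℕ) (w : A), star w * w = 1 ∧ star w * v ^ m = 0 := by
  let := CStarAlgebra.spectralOrder A
  have := CStarAlgebra.spectralOrderedRing A
  set p := 1 - v * star v
  have hp : p ≠ 0 := sub_ne_zero.2 hv'.symm
  have hp_sa : star p = p := by simp [p]
  have hpp : p * p = p := by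
    simp only [p, sub_mul, mul_sub, one_mul, mul_one, mul_assoc, ← mul_assoc (star v), hv]
    abel
  have hpv : star p * v = 0 := by simp [p, hp_sa, sub_mul, mul_assoc, hv]
  obtain ⟨m, x, y, hxy⟩ := hA.exists_sum_mul_mul_eq_one hp
  have hunit : IsUnit (∑ k, star (p * y k) * (p * y k)) := by
    refine isUnit_sum_star_mul_self_of_sum_star_mul_eq_one (f := fun k => p * star (x k)) ?_
    simpa [star_mul, hp_sa, mul_assoc, ← mul_assoc p p, hpp] using hxy
  rw [← star_sum_pow_mul_mul_sum hv hpv] at hunit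
  obtain ⟨c, hc⟩ := exists_isometry_mul_of_isUnit_star_mul_self hunit
  refine ⟨m, _, hc, ?_⟩
  rw [star_mul, mul_assoc, star_sum_pow_mul_mul_pow_eq_zero hv hpv, mul_zero]

theorem CStarSimple.exists_orthogonal_isometries (hA : CStarSimple A) {v : A}
    (hv : star v * v = 1) (hv' : v * star v ≠ 1) :
    ∃ S : ℕ → A, ∀ i j, star (S i) * S j = if i = j then 1 else 0 := by
  obtain ⟨m, w, hw, hwv⟩ := hA.exists_isometry_star_mul_pow_eq_zero hv hv'
  refine ⟨fun i => (v ^ m) ^ i * w, fun i j => ?_⟩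
  rw [star_pow_mul_mul_pow_mul (star_pow_mul_pow_self hv m) hwv, hw]

end CStarAlgebra

theorem not_dense_lg_of_orthogonal_isometries {A : Type*} [NormedRing A] [StarRing A]
    [CStarRing A] [CompleteSpace A] [Nontrivial A] {S : ℕ → A}
    (hS : ∀ i j, star (S i) * S j = if i = j then 1 else 0) (n : ℕ) : ¬ Dense (Lg A n) := by
  intro hdense
  obtain ⟨b, hb, hdist⟩ := hdense.exists_dist_lt (fun i : Fin n => star (S i))
    (ε := ((n : ℝ) + 1)⁻¹) (by positivity)
  have hnorm (k : ℕ) : ‖S k‖ = 1 := by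
    have : ‖S k‖ * ‖S k‖ = 1 := by rw [← CStarRing.norm_star_mul_self, hS, if_pos rfl, norm_one]
    nlinarith [norm_nonneg (S k)]
  set u : A := 1 - ∑ k : Fin n, S k * (star (S k) - b k)
  have hu : IsUnit u := by
    refine isUnit_one_sub_of_norm_lt_one ?_
    calc ‖∑ k : Fin n, S k * (star (S k) - b k)‖
        ≤ ∑ k : Fin n, dist (fun i : Fin n => star (S i)) b := by
          refine (norm_sum_le _ _).trans (sum_le_sum fun k _ => ?_)
          refine (norm_mul_le _ _).trans ?_
          rw [hnorm, one_mul, dist_eq_norm]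
          exact norm_le_pi_norm ((fun i : Fin n => star (S i)) - b) k
      _ = n * dist (fun i : Fin n => star (S i)) b := by simp
      _ < 1 := by
          have hn : (0 : ℝ) < n + 1 := by positivity
          have := mul_lt_mul_of_pos_left hdist hn
          rw [mul_inv_cancel₀ hn.ne'] at this
          nlinarith [dist_nonneg (x := fun i : Fin n => star (S i)) (y := b)]
  have hbu (i : Fin n) : b i = star (S i) * u := by
    simp [u, mul_sub, mul_sum, ← mul_assoc, hS, Fin.val_inj]
  have hy : IsUnit (∑ i : Fin n, star (b i) * star (S i)) := by
    rw [← Units.isUnit_mul_units _ hu.unit, IsUnit.unit_spec, sum_mul]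
    simpa [Lg, mul_assoc, ← hbu] using hb
  have hSn : (∑ i : Fin n, star (b i) * star (S i)) * S n = 0 := by
    simp [sum_mul, mul_assoc, hS, (Fin.is_lt _).ne]
  simpa [hy.mul_right_eq_zero.1 hSn] using hS n n

theorem exists_dense_lg_of_tsr_ne_top {A : Type*} [NormedRing A] [StarRing A] (h : tsr A ≠ ⊤) :
    ∃ n, Dense (Lg A n) := by
  by_contra! H
  refine h (sInf_eq_top.2 ?_)
  rintro _ ⟨n, -, rfl, hn⟩
  exact absurd hn (H n)

/-- a simple unital C*-algebra with finite topological stable rank is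
finite (every isometry is a unitary). -/
theorem finite_of_tsr_ne_top (A : Type*) [CStarAlgebra A]
    (hA : CStarSimple A) (h : tsr A ≠ ⊤) : CStarFinite A := by
  intro v hv
  by_contra hv'
  have : Nontrivial A := ⟨⟨0, 1, hA.1⟩⟩
  obtain ⟨n, hn⟩ := exists_dense_lg_of_tsr_ne_top h
  obtain ⟨S, hS⟩ := hA.exists_orthogonal_isometries hv hv'
  exact not_dense_lg_of_orthogonal_isometries hS n hn
end

section
/- If A is a unital C*-algebra with tsr(A) = 1, then tsr(M_n(A)) = 1 for every n ∈ ℕ, where M_n(A) denotes the n×n matrices over A. -/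
/-!
In a Banach algebra, if left-invertible elements are dense then every left-invertible element is
invertible, so `tsr A = 1` just says that the invertibles of `A` are dense. Density of invertibles
passes to `Mₙ(A)` by induction on `n`: approximate the top-left corner of a block matrix by an
invertible, then its Schur complement by an invertible; this works over any topological ring,
without continuity of inversion. Finally the canonical homomorphism `Mₙ(A) ≅ A ⊗ Mₙ(ℂ) → T` is
continuous with dense range, so it carries a dense set of invertibles to a dense set of invertibles.
-/

theorem Dense.prod_of_dense_fibers {X Y : Type*} [TopologicalSpace X] [TopologicalSpace Y]
    {s : Set X} {S : Set (X × Y)} (hs : Dense s) (hS : ∀ x ∈ s, Dense {y | (x, y) ∈ S}) :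
    Dense S := by
  refine dense_iff_inter_open.2 fun U hU ⟨p, hpU⟩ => ?_
  obtain ⟨u, v, hu, hv, hpu, hpv, huv⟩ := isOpen_prod_iff.1 hU p.1 p.2 hpU
  obtain ⟨x, hxu, hxs⟩ := hs.inter_open_nonempty u hu ⟨p.1, hpu⟩
  obtain ⟨y, hyv, hyS⟩ := (hS x hxs).inter_open_nonempty v hv ⟨p.2, hpv⟩
  exact ⟨(x, y), huv ⟨hxu, hyv⟩, hyS⟩

theorem DenseRange.dense_setOf_isUnit {M N F : Type*} [Monoid M] [Monoid N]
    [TopologicalSpace M] [TopologicalSpace N] [FunLike F M N] [MonoidHomClass F M N] {f : F}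
    (hf : DenseRange f) (hc : Continuous f) (h : Dense {a : M | IsUnit a}) :
    Dense {b : N | IsUnit b} :=
  (hf.dense_image hc h).mono <| Set.image_subset_iff.2 fun _ ha => ha.map f

namespace Matrix

variable {m n R : Type*} [Fintype m] [Fintype n] [DecidableEq m] [DecidableEq n]

section Ring

variable [Ring R]

theorem _root_.IsUnit.fromBlocks_zero₁₂ {a : Matrix m m R} {d : Matrix n n R} (ha : IsUnit a)
    (hd : IsUnit d) (c : Matrix n m R) : IsUnit (fromBlocks a 0 c d) := by
  obtain ⟨a, rfl⟩ := ha
  obtain ⟨d, rfl⟩ := hd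
  refine ⟨⟨fromBlocks a 0 c d, fromBlocks a.inv 0 (-(d.inv * c * a.inv)) d.inv, ?_, ?_⟩, rfl⟩
  · simp [fromBlocks_multiply, ← Matrix.mul_assoc]
  · simp [fromBlocks_multiply, Matrix.mul_assoc]

-- Over a commutative ring this is `Matrix.isUnit_fromBlocks_iff_of_invertible₁₁`.
theorem isUnit_fromBlocks_of_isUnit_schur {a : Matrix m m R} (ha : IsUnit a) (b : Matrix m n R)
    (c : Matrix n m R) {d : Matrix n n R} (hs : IsUnit (d - c * Ring.inverse a * b)) :
    IsUnit (fromBlocks a b c d) := by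
  obtain ⟨a, rfl⟩ := ha
  rw [Ring.inverse_unit] at hs
  have hfac : fromBlocks ↑a b c d =
      fromBlocks ↑a 0 c (d - c * a.inv * b) * fromBlocks 1 (a.inv * b) 0 1 := by
    simp [fromBlocks_multiply, ← Matrix.mul_assoc]
  have hunip : IsUnit (fromBlocks 1 (a.inv * b) 0 (1 : Matrix n n R)) :=
    ⟨⟨fromBlocks 1 (a.inv * b) 0 1, fromBlocks 1 (-(a.inv * b)) 0 1,
      by rw [fromBlocks_multiply]; simp, by rw [fromBlocks_multiply]; simp⟩, rfl⟩
  rw [hfac]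
  exact (a.isUnit.fromBlocks_zero₁₂ hs c).mul hunip

end Ring

section Topology

variable [Ring R] [TopologicalSpace R] [IsTopologicalRing R]

theorem dense_setOf_isUnit_sum (hm : Dense {a : Matrix m m R | IsUnit a})
    (hn : Dense {d : Matrix n n R | IsUnit d}) :
    Dense {M : Matrix (m ⊕ n) (m ⊕ n) R | IsUnit M} := by
  let blocks : (Matrix m m R × Matrix m n R × Matrix n m R) × Matrix n n R →
      Matrix (m ⊕ n) (m ⊕ n) R := fun p => fromBlocks p.1.1 p.1.2.1 p.1.2.2 p.2
  have hblocks : DenseRange blocks := Function.Surjective.denseRange fun M =>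
    ⟨((M.toBlocks₁₁, M.toBlocks₁₂, M.toBlocks₂₁), M.toBlocks₂₂), M.fromBlocks_toBlocks⟩
  have hcont : Continuous blocks := by fun_prop
  let S : Set ((Matrix m m R × Matrix m n R × Matrix n m R) × Matrix n n R) :=
    {p | IsUnit p.1.1 ∧ IsUnit (p.2 - p.1.2.2 * Ring.inverse p.1.1 * p.1.2.1)}
  have hS : Dense S := by
    refine (hm.prod dense_univ).prod_of_dense_fibers fun x hx => ?_
    have hfiber :
        {d | (x, d) ∈ S} = (· - x.2.2 * Ring.inverse x.1 * x.2.1) ⁻¹' {d | IsUnit d} := by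
      ext d
      simp [S, show IsUnit x.1 from hx.1]
    rw [hfiber]
    exact hn.preimage (isOpenMap_sub_right _)
  refine (hblocks.dense_image hcont hS).mono ?_
  rintro _ ⟨p, ⟨ha, hs⟩, rfl⟩
  exact isUnit_fromBlocks_of_isUnit_schur ha _ _ hs

theorem dense_setOf_isUnit_fin (h : Dense {a : R | IsUnit a}) :
    ∀ n : ℕ, Dense {M : Matrix (Fin n) (Fin n) R | IsUnit M}
  | 0 => by
    convert dense_univ
    exact Set.eq_univ_of_forall fun M => Subsingleton.elim M 1 ▸ isUnit_one
  | n + 1 => by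
    have hscalar : Function.Surjective (scalar (Fin 1) : R →+* Matrix (Fin 1) (Fin 1) R) :=
      fun M => ⟨M 0 0, by ext i j; simp [Subsingleton.elim i 0, Subsingleton.elim j 0]⟩
    have hone : Dense {a : Matrix (Fin 1) (Fin 1) R | IsUnit a} :=
      hscalar.denseRange.dense_setOf_isUnit (continuous_pi fun _ => continuous_id).matrix_diagonal h
    exact (reindexRingEquiv R finSumFinEquiv).surjective.denseRange.dense_setOf_isUnit
      (continuous_id.matrix_reindex _ _) (dense_setOf_isUnit_sum (dense_setOf_isUnit_fin h n) hone)

end Topology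

end Matrix

section NormedRing

variable {R : Type*} [NormedRing R] [CompleteSpace R]

/-- A left-invertible `a` close enough to `c` makes `a * b` a unit, being near `c * b = 1`;
then `a` has inverses on both sides, and `b = a⁻¹ * (a * b)`. -/
theorem isUnit_of_mul_eq_one_of_dense (hd : Dense {a : R | ∃ d, d * a = 1}) {b c : R}
    (hcb : c * b = 1) : IsUnit b := by
  obtain ⟨a, hac, d, hda⟩ := Metric.dense_iff.1 hd c (‖b‖ + 1)⁻¹ (by positivity)
  have hab : ‖1 - a * b‖ < 1 :=
    calc ‖1 - a * b‖ = ‖(c - a) * b‖ := by rw [sub_mul, hcb]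
      _ ≤ ‖c - a‖ * ‖b‖ := norm_mul_le _ _
      _ < (‖b‖ + 1)⁻¹ * (‖b‖ + 1) := by
        rw [Metric.mem_ball, dist_comm, dist_eq_norm] at hac
        gcongr; linarith [norm_nonneg b]
      _ = 1 := inv_mul_cancel₀ (by positivity)
  have hab_unit : IsUnit (a * b) := by
    simpa using (Units.oneSub _ hab).isUnit
  obtain ⟨w, hw⟩ := hab_unit
  have ha : IsUnit a :=
    isUnit_iff_exists_and_exists.2 ⟨⟨b * ↑w⁻¹, by rw [← mul_assoc, ← hw, w.mul_inv]⟩, ⟨d, hda⟩⟩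
  exact ha.mul_left_iff.1 (hw ▸ w.isUnit)

end NormedRing

theorem dense_lg_one_iff (A : Type*) [NormedRing A] [StarRing A] [CompleteSpace A] :
    Dense (Lg A 1) ↔ Dense {a : A | IsUnit a} := by
  have hLg : Lg A 1 = Homeomorph.funUnique (Fin 1) A ⁻¹' {a | IsUnit (star a * a)} := by
    ext b
    simp [Lg]
  have hleft : {a : A | IsUnit (star a * a)} ⊆ {a | ∃ d, d * a = 1} := fun a ⟨u, hu⟩ =>
    ⟨↑u⁻¹ * star a, by rw [mul_assoc, ← hu, u.inv_mul]⟩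
  rw [hLg, (Homeomorph.funUnique (Fin 1) A).isOpenQuotientMap.dense_preimage_iff]
  refine ⟨fun h => ?_, fun h => h.mono fun a ha => ha.star.mul ha⟩
  have hleft_dense := h.mono hleft
  refine hleft_dense.mono ?_
  rintro b ⟨c, hcb⟩
  exact isUnit_of_mul_eq_one_of_dense hleft_dense hcb

theorem tsr_eq_one_iff (A : Type*) [NormedRing A] [StarRing A] : tsr A = 1 ↔ Dense (Lg A 1) := by
  refine ⟨fun h => ?_, fun hd => ?_⟩
  · have hne : {N : ℕ∞ | ∃ n : ℕ, 1 ≤ n ∧ N = n ∧ Dense (Lg A n)}.Nonempty := by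
      by_contra hempty
      simp [tsr, Set.not_nonempty_iff_eq_empty.1 hempty] at h
    obtain ⟨m, -, hm, hd⟩ := csInf_mem hne
    rw [← tsr, h, eq_comm, Nat.cast_eq_one] at hm
    exact hm ▸ hd
  · refine le_antisymm (sInf_le ⟨1, le_rfl, Nat.cast_one.symm, hd⟩) (le_sInf ?_)
    rintro _ ⟨m, hm, rfl, -⟩
    exact_mod_cast hm

namespace CStarTensor

open Matrix TensorProduct
open scoped CStarAlgebra

variable {A T : Type*} [CStarAlgebra A] [CStarAlgebra T] {n : ℕ} (t : CStarTensor A (MatrixAlg n) T)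

noncomputable def matrixAlgHom : Matrix (Fin n) (Fin n) A →ₐ[ℂ] T :=
  (Algebra.TensorProduct.lift t.ι₁.toAlgHom
    (t.ι₂.toAlgHom.comp (toEuclideanCLM (𝕜 := ℂ) (n := Fin n)).toAlgEquiv.toAlgHom)
    fun a _ => t.comm a _).comp (matrixEquivTensor (Fin n) ℂ A).toAlgHom

theorem matrixAlgHom_apply (M : Matrix (Fin n) (Fin n) A) :
    t.matrixAlgHom M = ∑ p : Fin n × Fin n,
      t.ι₁ (M p.1 p.2) * t.ι₂ (toEuclideanCLM (𝕜 := ℂ) (single p.1 p.2 1)) := by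
  simp only [matrixAlgHom, AlgHom.comp_apply, AlgEquiv.coe_toAlgHom, matrixEquivTensor_apply,
    map_sum]
  rfl

theorem continuous_matrixAlgHom : Continuous t.matrixAlgHom := by
  simp_rw [funext t.matrixAlgHom_apply]
  exact continuous_finsetSum _ fun p _ =>
    ((map_continuous t.ι₁).comp (continuous_id.matrix_elem p.1 p.2)).mul continuous_const

theorem matrixAlgHom_symm_tmul (a : A) (z : Matrix (Fin n) (Fin n) ℂ) :
    t.matrixAlgHom ((matrixEquivTensor (Fin n) ℂ A).symm (a ⊗ₜ z)) =
      t.ι₁ a * t.ι₂ (toEuclideanCLM (𝕜 := ℂ) z) := by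
  simp only [matrixAlgHom, AlgHom.comp_apply, AlgEquiv.coe_toAlgHom, AlgEquiv.apply_symm_apply]
  rfl

theorem denseRange_matrixAlgHom : DenseRange t.matrixAlgHom := by
  set s := Set.range t.ι₁ ∪ Set.range t.ι₂
  have hgen : s ⊆ Set.range t.matrixAlgHom := by
    rintro _ (⟨a, rfl⟩ | ⟨z, rfl⟩)
    · exact ⟨(matrixEquivTensor (Fin n) ℂ A).symm (a ⊗ₜ 1), by rw [matrixAlgHom_symm_tmul]; simp⟩
    · exact ⟨(matrixEquivTensor (Fin n) ℂ A).symm (1 ⊗ₜ (toEuclideanCLM (𝕜 := ℂ)).symm z),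
        by rw [matrixAlgHom_symm_tmul]; simp⟩
  have hstar : star s ⊆ s := by
    rintro x (⟨a, ha⟩ | ⟨z, hz⟩)
    · exact Or.inl ⟨star a, by rw [map_star, ha, star_star]⟩
    · exact Or.inr ⟨star z, by rw [map_star, hz, star_star]⟩
  have hadjoin : (StarAlgebra.adjoin ℂ s : Set T) ⊆ Set.range t.matrixAlgHom := by
    rw [← StarSubalgebra.coe_toSubalgebra, StarAlgebra.adjoin_toSubalgebra,
      Set.union_eq_self_of_subset_right hstar, ← AlgHom.coe_range]
    exact Algebra.adjoin_le hgen
  refine dense_iff_closure_eq.2 <| Set.eq_univ_of_forall fun x => closure_mono hadjoin ?_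
  rw [← StarSubalgebra.topologicalClosure_coe, t.generates]
  trivial

end CStarTensor

/-- if `tsr A = 1` then `tsr (Mₙ(A)) = 1` for every `n`. Here `Mₙ(A)` is
realized as the C*-tensor product `A ⊗ Mₙ(ℂ)` (with `Mₙ(ℂ)` the operators on `ℂⁿ`), via
the canonical identification `Mₙ(A) ≅ A ⊗ Mₙ(ℂ)`. -/
theorem tsr_matrix_eq_one (A : Type*) [CStarAlgebra A] (h : tsr A = 1) (n : ℕ)
    (T : Type*) [CStarAlgebra T] (t : CStarTensor A (MatrixAlg n) T) :
    tsr T = 1 := by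
  have hA : Dense {a : A | IsUnit a} := (dense_lg_one_iff A).1 ((tsr_eq_one_iff A).1 h)
  have hT : Dense {x : T | IsUnit x} :=
    t.denseRange_matrixAlgHom.dense_setOf_isUnit t.continuous_matrixAlgHom
      (Matrix.dense_setOf_isUnit_fin hA n)
  exact (tsr_eq_one_iff T).2 ((dense_lg_one_iff T).2 hT)
end

section
/- If v is an isometry in a unital C*-algebra A (v*v = 1) and vv* ≠ 1, then v cannot be approximated in norm by invertible elements of A: specifically, for every invertible b ∈ A, ‖v − b‖ ≥ 1. -/
/-! `star v * b = 1 - star v * (v - b)` is within distance `< 1` of `1`, hence invertible, so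
`star v` is invertible; but an invertible element with a right inverse `v` has `v` as its
two-sided inverse, which makes `v` unitary. -/

theorem IsUnit.mul_eq_one_symm {M : Type*} [Monoid M] {a b : M} (ha : IsUnit a)
    (hab : a * b = 1) : b * a = 1 :=
  ha.mul_left_cancel (by rw [← mul_assoc, hab, one_mul, mul_one])

section Isometry

variable {A : Type*} [NormedRing A] [StarRing A] [CStarRing A] {v : A}

theorem norm_le_one_of_star_mul_self_eq_one (hv : star v * v = 1) : ‖v‖ ≤ 1 := by
  nontriviality A
  have hsq : ‖v‖ * ‖v‖ = 1 := by rw [← CStarRing.norm_star_mul_self, hv, norm_one]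
  nlinarith [norm_nonneg v]

theorem isUnit_star_of_norm_sub_lt_one [CompleteSpace A] (hv : star v * v = 1) {b : A}
    (hb : IsUnit b) (h : ‖v - b‖ < 1) : IsUnit (star v) := by
  have hsmall : ‖star v * (v - b)‖ < 1 :=
    calc ‖star v * (v - b)‖ ≤ ‖star v‖ * ‖v - b‖ := norm_mul_le _ _
      _ ≤ ‖v - b‖ := by
        rw [norm_star]
        exact mul_le_of_le_one_left (norm_nonneg _) (norm_le_one_of_star_mul_self_eq_one hv)
      _ < 1 := h
  have hunit : IsUnit (star v * b) := by
    simpa [mul_sub, hv] using isUnit_one_sub_of_norm_lt_one hsmall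
  exact hb.mul_right_iff.mp hunit

end Isometry

/-- a non-unitary isometry is at distance at least `1` from every
invertible element. -/
theorem one_le_dist_isometry_invertible (A : Type*) [CStarAlgebra A]
    (v : A) (hv : star v * v = 1) (hv' : v * star v ≠ 1) :
    ∀ b : A, IsUnit b → 1 ≤ ‖v - b‖ := by
  intro b hb
  by_contra! h
  exact hv' ((isUnit_star_of_norm_sub_lt_one hv hb h).mul_eq_one_symm hv)
end
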